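/- Let G be a connected nontrivial simple graph with m vertices and let n ≥ 4. If min{n²·λ(G), (n−1)·(m + 2·e(G))} > 2n·δ(G) + 2n − 4, then the strong product G ⊠ K_n is super restricted edge-connected, i.e., every minimum restricted edge-cut of G ⊠ K_n isolates an edge. -/

import Mathlib

/-- The strong product of two simple graphs. -/
def strongProd {α β : Type*} (G : SimpleGraph α) (H : SimpleGraph β) :
    SimpleGraph (α × β) where
  Adj x y := (x.1 = y.1 ∧ H.Adj x.2 y.2) ∨ (x.2 = y.2 ∧ G.Adj x.1 y.1) ∨
    (G.Adj x.1 y.1 ∧ H.Adj x.2 y.2)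
  symm := by
    refine ⟨?_⟩
    rintro ⟨a₁, a₂⟩ ⟨b₁, b₂⟩ (⟨h1, h2⟩ | ⟨h1, h2⟩ | ⟨h1, h2⟩)
    · exact Or.inl ⟨h1.symm, h2.symm⟩
    · exact Or.inr (Or.inl ⟨h1.symm, h2.symm⟩)
    · exact Or.inr (Or.inr ⟨h1.symm, h2.symm⟩)
  loopless := by
    refine ⟨?_⟩
    rintro ⟨a₁, a₂⟩ (⟨_, h⟩ | ⟨_, h⟩ | ⟨h, _⟩)
    · exact H.irrefl h
    · exact G.irrefl h
    · exact G.irrefl h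

/-- The degree of a vertex. -/
noncomputable def deg {α : Type*} (G : SimpleGraph α) (v : α) : ℕ := (G.neighborSet v).ncard

/-- The minimum degree `δ(G)`. -/
noncomputable def minDeg {α : Type*} (G : SimpleGraph α) : ℕ := sInf {d | ∃ v, d = deg G v}

/-- The number of edges `e(G)`. -/
noncomputable def numEdges {α : Type*} (G : SimpleGraph α) : ℕ := G.edgeSet.ncard

/-- The minimum edge-degree `ξ(G) = min {d(u) + d(v) - 2 : uv ∈ E(G)}`. -/
noncomputable def minEdgeDeg {α : Type*} (G : SimpleGraph α) : ℕ :=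
  sInf {d | ∃ u v, G.Adj u v ∧ d = deg G u + deg G v - 2}

/-- The edge-connectivity `λ(G)`. -/
noncomputable def edgeConn {α : Type*} (G : SimpleGraph α) : ℕ :=
  sInf {k | ∃ S : Set (Sym2 α), S ⊆ G.edgeSet ∧ S.ncard = k ∧
    ¬ (G.deleteEdges S).Connected}

/-- `S` is a restricted edge-cut of `G`: deleting `S` disconnects `G` and every
component of `G - S` has at least two vertices. -/
def IsRestrictedEdgeCut {α : Type*} (G : SimpleGraph α) (S : Set (Sym2 α)) : Prop :=
  S ⊆ G.edgeSet ∧ ¬ (G.deleteEdges S).Connected ∧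
    ∀ v : α, 2 ≤ ((G.deleteEdges S).connectedComponentMk v).supp.ncard

/-- The restricted edge-connectivity `λ'(G)`. -/
noncomputable def restEdgeConn {α : Type*} (G : SimpleGraph α) : ℕ :=
  sInf {k | ∃ S : Set (Sym2 α), IsRestrictedEdgeCut G S ∧ S.ncard = k}

/-- `G` is super restricted edge-connected: every minimum restricted edge-cut
isolates an edge, i.e. some component of `G - S` has exactly two vertices. -/
def SuperRestrictedEdgeConnected {α : Type*} (G : SimpleGraph α) : Prop :=
  ∀ S : Set (Sym2 α), IsRestrictedEdgeCut G S → S.ncard = restEdgeConn G →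
    ∃ v : α, ((G.deleteEdges S).connectedComponentMk v).supp.ncard = 2

/-- The set `[X, Y]_G` of edges of `G` with one end in `X` and the other in `Y`. -/
def edgesBetween {α : Type*} (G : SimpleGraph α) (X Y : Set α) : Set (Sym2 α) :=
  {e | e ∈ G.edgeSet ∧ ∃ u ∈ X, ∃ v ∈ Y, e = s(u, v)}

/-!
Write `Γ = G ⊠ Kₙ`, `δ = δ(G)` and `K = n(δ + 1)`. Every vertex of `Γ` has degree at least
`K - 1`, and the edges leaving two adjacent vertices in the fibre over a vertex of minimum degree
form a restricted edge-cut of size `2K - 4`, so `λ'(Γ) ≤ 2K - 4`. If a minimum restricted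
edge-cut `S` isolated no edge, every component of `Γ - S` would have at least three vertices; a
component with `c` vertices is left by at least `c(K - c)` edges, which forces `c ≥ K - 2`.

Take a component `X` and let `p x` be the number of its vertices in the fibre over `x`. The edges
leaving `X` number `∑ₓ p x ∑_{y ∈ N[x]} (n - p y)`. If some fibre lies inside `X` and another
misses it, summing over the level cuts `{x | t ≤ p x}` of `G` bounds this below by `n²λ(G)`; if
every fibre meets both `X` and its complement, each vertex and each edge of `G` contributes at
least `n - 1`, giving `(n - 1)(m + 2e(G))`. Otherwise (up to replacing `X` by its complement) no
fibre lies inside `X`, and an edge of `G` from a fibre meeting `X` to one missing it pushes the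
trivial bound `(δ + 1)|X| ≥ (δ + 1)(K - 2)` above `2K - 4`. In every case `|S| > 2K - 4`.
-/

open Finset SimpleGraph

section EdgeCuts

variable {α : Type*}

lemma deg_eq_degree (G : SimpleGraph α) (v : α) [Fintype (G.neighborSet v)] :
    deg G v = G.degree v := by
  rw [deg, Set.ncard_eq_toFinset_card', degree, neighborFinset]

lemma minDeg_eq_minDegree [Fintype α] (G : SimpleGraph α) [DecidableRel G.Adj] :
    minDeg G = G.minDegree := by
  cases isEmpty_or_nonempty α
  · simp [minDeg, minDegree_of_subsingleton]
  obtain ⟨v, hv⟩ := G.exists_minimal_degree_vertex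
  refine le_antisymm (Nat.sInf_le ⟨v, by rw [hv, deg_eq_degree]⟩) (le_csInf ⟨_, v, rfl⟩ ?_)
  rintro _ ⟨w, rfl⟩
  rw [deg_eq_degree]
  exact G.minDegree_le_degree w

lemma numEdges_eq_card_edgeFinset [Fintype α] (G : SimpleGraph α) [DecidableRel G.Adj] :
    numEdges G = #G.edgeFinset := by
  rw [numEdges, Set.ncard_eq_toFinset_card', edgeFinset]

lemma edgesBetween_subset_edgeSet (G : SimpleGraph α) (X Y : Set α) :
    edgesBetween G X Y ⊆ G.edgeSet := fun _ he => he.1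

lemma mk_notMem_edgesBetween_compl (G : SimpleGraph α) {X : Set α} {a b : α}
    (h : a ∈ X ↔ b ∈ X) : s(a, b) ∉ edgesBetween G X Xᶜ := by
  rintro ⟨-, c, hc, d, hd, he⟩
  rcases Sym2.eq_iff.mp he with ⟨rfl, rfl⟩ | ⟨rfl, rfl⟩
  · exact hd (h.mp hc)
  · exact hd (h.mpr hc)

lemma mem_iff_of_adj_deleteEdges_edgesBetween {G : SimpleGraph α} {X : Set α} {a b : α}
    (hab : (G.deleteEdges (edgesBetween G X Xᶜ)).Adj a b) : a ∈ X ↔ b ∈ X := by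
  rw [deleteEdges_adj] at hab
  by_contra hne
  refine hab.2 ⟨hab.1, ?_⟩
  by_cases ha : a ∈ X
  · exact ⟨a, ha, b, fun hb => hne (iff_of_true ha hb), rfl⟩
  · exact ⟨b, not_not.mp fun hb => hne (iff_of_false ha hb), a, ha, Sym2.eq_swap⟩

lemma not_reachable_deleteEdges_edgesBetween (G : SimpleGraph α) {X : Set α} {a b : α}
    (ha : a ∈ X) (hb : b ∉ X) : ¬ (G.deleteEdges (edgesBetween G X Xᶜ)).Reachable a b := by
  rintro ⟨w⟩
  obtain ⟨d, -, hd, hd'⟩ := w.exists_boundary_dart X ha hb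
  exact hd' ((mem_iff_of_adj_deleteEdges_edgesBetween d.adj).mp hd)

lemma edgeConn_le_ncard_edgesBetween (G : SimpleGraph α) {X : Set α} {a b : α}
    (ha : a ∈ X) (hb : b ∉ X) : edgeConn G ≤ (edgesBetween G X Xᶜ).ncard :=
  Nat.sInf_le ⟨_, edgesBetween_subset_edgeSet G X Xᶜ, rfl,
    fun hc => not_reachable_deleteEdges_edgesBetween G ha hb (hc.preconnected a b)⟩

lemma edgesBetween_supp_compl_subset (G : SimpleGraph α) (S : Set (Sym2 α))
    (C : (G.deleteEdges S).ConnectedComponent) : edgesBetween G C.supp C.suppᶜ ⊆ S := by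
  rintro _ ⟨he, u, hu, v, hv, rfl⟩
  by_contra hS
  have hadj : (G.deleteEdges S).Adj u v := deleteEdges_adj.mpr ⟨he, hS⟩
  exact hv ((C.mem_supp_iff v).mpr (((C.mem_supp_iff u).mp hu) ▸
    (ConnectedComponent.eq.mpr hadj.reachable).symm))

lemma two_le_ncard_supp_of_adj [Finite α] {H : SimpleGraph α} {w w' : α} (h : H.Adj w w') :
    2 ≤ (H.connectedComponentMk w).supp.ncard := by
  rw [← Set.ncard_pair h.ne]
  refine Set.ncard_le_ncard ?_ (Set.toFinite _)
  rintro z (rfl | rfl)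
  · exact (ConnectedComponent.mem_supp_iff _ _).mpr rfl
  · exact (ConnectedComponent.mem_supp_iff _ _).mpr (ConnectedComponent.eq.mpr h.reachable.symm)

lemma exists_adj_one_le_of_eq_zero {G : SimpleGraph α} {p : α → ℕ} (hG : G.Connected)
    (hpos : ∃ x, 1 ≤ p x) (hzero : ∃ x, p x = 0) : ∃ a b, G.Adj a b ∧ 1 ≤ p a ∧ p b = 0 := by
  obtain ⟨x, hx⟩ := hpos
  obtain ⟨y, hy⟩ := hzero
  obtain ⟨d, -, hd, hd'⟩ :=
    (hG.preconnected x y).some.exists_boundary_dart {z | 1 ≤ p z} hx (by simp [hy])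
  exact ⟨d.fst, d.snd, d.adj, hd, by simpa using hd'⟩

end EdgeCuts

section FiniteGraph

variable {α : Type*} [Fintype α] (G : SimpleGraph α) [DecidableRel G.Adj]

lemma sum_sum_neighborFinset_comm (f : α → α → ℕ) :
    ∑ x, ∑ y ∈ G.neighborFinset x, f x y = ∑ x, ∑ y ∈ G.neighborFinset x, f y x :=
  sum_comm' fun x y => by simp [adj_comm]

lemma two_mul_sum_sum_neighborFinset (f : α → α → ℕ) :
    2 * ∑ x, ∑ y ∈ G.neighborFinset x, f x y =
      ∑ x, ∑ y ∈ G.neighborFinset x, (f x y + f y x) := by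
  rw [two_mul]
  nth_rw 2 [sum_sum_neighborFinset_comm]
  simp only [← sum_add_distrib]

variable [DecidableEq α]

lemma card_edgesBetween_compl (W : Finset α) :
    (edgesBetween G W (↑W)ᶜ).ncard = ∑ v ∈ W, #(G.neighborFinset v \ W) := by
  have hW : edgesBetween G W (↑W)ᶜ =
      ↑((W.sigma fun v => G.neighborFinset v \ W).image fun z => s(z.1, z.2)) := by
    ext e
    simp only [edgesBetween, Set.mem_ofPred_eq, coe_image, Set.mem_image, mem_coe, mem_sigma,
      mem_sdiff, mem_neighborFinset, Set.mem_compl_iff]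
    constructor
    · rintro ⟨he, u, hu, v, hv, rfl⟩
      exact ⟨⟨u, v⟩, ⟨hu, he, hv⟩, rfl⟩
    · rintro ⟨⟨u, v⟩, ⟨hu, huv, hv⟩, rfl⟩
      exact ⟨huv, u, hu, v, hv, rfl⟩
  rw [hW, Set.ncard_coe_finset, card_image_of_injOn, card_sigma]
  rintro ⟨u, v⟩ huv ⟨u', v'⟩ huv' he
  simp only [coe_sigma, Set.mem_sigma_iff, mem_coe, mem_sdiff] at huv huv'
  rcases Sym2.eq_iff.mp he with ⟨rfl, rfl⟩ | ⟨rfl, rfl⟩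
  · rfl
  · exact absurd huv.1 huv'.2.2

lemma card_neighborFinset_sdiff_pair_add_one {a b : α} (hab : G.Adj a b) :
    #(G.neighborFinset a \ {a, b}) + 1 = G.degree a := by
  have : G.neighborFinset a \ {a, b} = (G.neighborFinset a).erase b := by
    ext z
    simp only [mem_sdiff, mem_insert, mem_singleton, mem_erase, mem_neighborFinset, not_or]
    exact ⟨fun ⟨h, _, hb⟩ => ⟨hb, h⟩, fun ⟨hb, h⟩ => ⟨h, h.ne', hb⟩⟩
  rw [this, card_erase_add_one ((mem_neighborFinset _ _ _).mpr hab), card_neighborFinset_eq_degree]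

/-- The edges leaving an edge `uv` form a restricted edge-cut of size `d(u) + d(v) - 2`. -/
lemma restEdgeConn_add_two_le {u v w : α} (huv : G.Adj u v) (hwu : w ≠ u) (hwv : w ≠ v)
    (hdeg : ∀ z, z ≠ u → z ≠ v → 3 ≤ G.degree z) :
    restEdgeConn G + 2 ≤ G.degree u + G.degree v := by
  set W : Finset α := {u, v}
  set T := edgesBetween G W (↑W)ᶜ
  have hneighbor : ∀ z, ∃ z', (G.deleteEdges T).Adj z z' := by
    intro z
    obtain ⟨z', hzz', hside⟩ : ∃ z', G.Adj z z' ∧ (z ∈ W ↔ z' ∈ W) := by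
      by_cases hz : z ∈ W
      · rcases mem_insert.mp hz with rfl | hz
        · exact ⟨v, huv, by simp [W]⟩
        · obtain rfl := mem_singleton.mp hz
          exact ⟨u, huv.symm, by simp [W]⟩
      · have hcard : #W < #(G.neighborFinset z) := by
          simp only [W, mem_insert, mem_singleton, not_or] at hz
          have := hdeg z hz.1 hz.2
          have : #W ≤ 2 := card_le_two
          rw [card_neighborFinset_eq_degree]
          omega
        obtain ⟨z', hz', hz'W⟩ := exists_mem_notMem_of_card_lt_card hcard
        exact ⟨z', (mem_neighborFinset _ _ _).mp hz', iff_of_false hz hz'W⟩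
    exact ⟨z', deleteEdges_adj.mpr
      ⟨hzz', mk_notMem_edgesBetween_compl G (by simpa using hside)⟩⟩
  have hcut : IsRestrictedEdgeCut G T := by
    refine ⟨edgesBetween_subset_edgeSet _ _ _, fun hc => ?_, fun z => ?_⟩
    · exact not_reachable_deleteEdges_edgesBetween G (by simp [W] : u ∈ (W : Set α))
        (by simp [W, hwu, hwv] : w ∉ (W : Set α)) (hc.preconnected u w)
    · obtain ⟨z', hzz'⟩ := hneighbor z
      exact two_le_ncard_supp_of_adj hzz'
  have hT : T.ncard + 2 = G.degree u + G.degree v := by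
    have hu := card_neighborFinset_sdiff_pair_add_one G huv
    have hv := card_neighborFinset_sdiff_pair_add_one G huv.symm
    rw [pair_comm] at hv
    rw [card_edgesBetween_compl, sum_pair huv.ne]
    simp only [W]
    omega
  have hle : restEdgeConn G ≤ T.ncard := Nat.sInf_le ⟨T, hcut, rfl⟩
  omega

lemma card_mul_le_ncard_edgesBetween (W : Finset α) {k : ℕ} (hk : ∀ v ∈ W, k ≤ G.degree v) :
    #W * (k + 1 - #W) ≤ (edgesBetween G W (↑W)ᶜ).ncard := by
  rw [card_edgesBetween_compl, ← smul_eq_mul]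
  refine card_nsmul_le_sum _ _ _ fun v hv => ?_
  have hinter : #(G.neighborFinset v ∩ W) + 1 ≤ #W := by
    rw [← card_erase_add_one hv]
    refine Nat.add_le_add_right (card_le_card fun z hz => ?_) 1
    rw [mem_inter, mem_neighborFinset] at hz
    exact mem_erase.mpr ⟨hz.1.ne', hz.2⟩
  have := card_sdiff_add_card_inter (G.neighborFinset v) W
  rw [card_neighborFinset_eq_degree] at this
  have := hk v hv
  omega

lemma le_ncard_supp_add_two {S : Set (Sym2 α)} {K : ℕ} (hdeg : ∀ v, K ≤ G.degree v + 1)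
    (hS : S.ncard + 4 ≤ 2 * K) (C : (G.deleteEdges S).ConnectedComponent)
    (hC : 3 ≤ C.supp.ncard) : K ≤ C.supp.ncard + 2 := by
  classical
  set c := C.supp.ncard
  have hc : #C.supp.toFinset = c := (Set.ncard_eq_toFinset_card' _).symm
  have hbound : c * (K - c) ≤ S.ncard := by
    have h := card_mul_le_ncard_edgesBetween G C.supp.toFinset (k := K - 1)
      fun v _ => Nat.sub_le_of_le_add (hdeg v)
    rw [hc, Set.coe_toFinset] at h
    calc c * (K - c) ≤ c * (K - 1 + 1 - c) := Nat.mul_le_mul_left c (by omega)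
      _ ≤ _ := h.trans (Set.ncard_le_ncard (edgesBetween_supp_compl_subset G S C)
          (Set.toFinite S))
  clear_value c
  by_contra! hsmall
  obtain ⟨a, rfl⟩ : ∃ a, c = a + 3 := ⟨c - 3, by omega⟩
  obtain ⟨b, rfl⟩ : ∃ b, K = a + b + 6 := ⟨K - a - 6, by omega⟩
  rw [show a + b + 6 - (a + 3) = b + 3 by omega] at hbound
  nlinarith

end FiniteGraph

lemma mul_tsub_add_tsub_le {n a b : ℕ} (ha : a ≤ n) (hb : b ≤ n) :
    n * (a - b + (b - a)) ≤ a * (n - b) + b * (n - a) := by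
  rcases le_total a b with hab | hab
  · rw [Nat.sub_eq_zero_of_le hab, zero_add]
    zify [ha, hb, hab]
    nlinarith
  · rw [Nat.sub_eq_zero_of_le hab, add_zero]
    zify [ha, hb, hab]
    nlinarith

lemma two_mul_sub_one_le {n a b : ℕ} (ha : 1 ≤ a) (ha' : a < n) (hb : 1 ≤ b) (hb' : b < n) :
    2 * (n - 1) ≤ a * (n - b) + b * (n - a) := by
  zify [ha'.le, hb'.le, (show 1 ≤ n by omega)]
  have hab : (0 : ℤ) ≤ (a - 1) * (n - 1 - b) := by
    apply mul_nonneg <;> omega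
  have hba : (0 : ℤ) ≤ (b - 1) * (n - 1 - a) := by
    apply mul_nonneg <;> omega
  nlinarith

section FiberEdgeBoundary

variable {V : Type*} [Fintype V] [DecidableEq V] (G : SimpleGraph V) [DecidableRel G.Adj]
  (n : ℕ) (p : V → ℕ)

/-- If `p x` is the number of vertices of `X ⊆ V × Fin n` in the fibre over `x`, this is the
number of edges of `G ⊠ Kₙ` leaving `X`. -/
def fiberEdgeBoundary : ℕ :=
  ∑ x, p x * ∑ y ∈ insert x (G.neighborFinset x), (n - p y)

lemma fiberEdgeBoundary_eq :
    fiberEdgeBoundary G n p =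
      ∑ x, p x * (n - p x) + ∑ x, ∑ y ∈ G.neighborFinset x, p x * (n - p y) := by
  rw [fiberEdgeBoundary, ← sum_add_distrib]
  refine sum_congr rfl fun x _ => ?_
  rw [sum_insert (by simp), mul_add, mul_sum]

lemma fiberEdgeBoundary_tsub (hp : ∀ x, p x ≤ n) :
    fiberEdgeBoundary G n (fun x => n - p x) = fiberEdgeBoundary G n p := by
  simp only [fiberEdgeBoundary_eq, Nat.sub_sub_self (hp _)]
  rw [sum_sum_neighborFinset_comm G]
  simp only [mul_comm]

lemma mul_edgeConn_le_sum_tsub (hp : ∀ x, p x ≤ n) (hfull : ∃ x, p x = n)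
    (hempty : ∃ x, p x = 0) :
    n * edgeConn G ≤ ∑ x, ∑ y ∈ G.neighborFinset x, (p x - p y) := by
  obtain ⟨a, ha⟩ := hfull
  obtain ⟨b, hb⟩ := hempty
  have hlevel : ∀ t ∈ Icc 1 n,
      edgeConn G ≤ ∑ x, ∑ y ∈ G.neighborFinset x, if p y < t ∧ t ≤ p x then 1 else 0 := by
    intro t ht
    rw [mem_Icc] at ht
    have h := edgeConn_le_ncard_edgesBetween G (X := ↑({x | t ≤ p x} : Finset V)) (a := a)
      (b := b) (by simp [ha, ht.2]) (by simp [hb]; omega)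
    rw [card_edgesBetween_compl] at h
    refine h.trans_eq ?_
    rw [sum_filter]
    refine sum_congr rfl fun x _ => ?_
    by_cases hx : t ≤ p x
    · simp only [hx, if_true, and_true, ← card_filter]
      congr 1
      ext y
      simp
    · simp [hx]
  have hcount : ∀ x y, ∑ t ∈ Icc 1 n, (if p y < t ∧ t ≤ p x then 1 else 0) = p x - p y := by
    intro x y
    rw [← card_filter, show {t ∈ Icc 1 n | p y < t ∧ t ≤ p x} = Icc (p y + 1) (p x) by
      ext t; simp only [mem_filter, mem_Icc]; have := hp x; omega, Nat.card_Icc]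
    omega
  calc n * edgeConn G = ∑ t ∈ Icc 1 n, edgeConn G := by simp
    _ ≤ ∑ t ∈ Icc 1 n, ∑ x, ∑ y ∈ G.neighborFinset x, if p y < t ∧ t ≤ p x then 1 else 0 :=
      sum_le_sum hlevel
    _ = ∑ x, ∑ y ∈ G.neighborFinset x, (p x - p y) := by
      rw [sum_comm]
      refine sum_congr rfl fun x _ => ?_
      rw [sum_comm]
      exact sum_congr rfl fun y _ => hcount x y

variable {n p}

lemma sq_mul_edgeConn_le_fiberEdgeBoundary (hp : ∀ x, p x ≤ n) (hfull : ∃ x, p x = n)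
    (hempty : ∃ x, p x = 0) : n ^ 2 * edgeConn G ≤ fiberEdgeBoundary G n p := by
  have hpair : 2 * (n * ∑ x, ∑ y ∈ G.neighborFinset x, (p x - p y)) ≤
      2 * ∑ x, ∑ y ∈ G.neighborFinset x, p x * (n - p y) := by
    rw [mul_left_comm, two_mul_sum_sum_neighborFinset, two_mul_sum_sum_neighborFinset, mul_sum]
    exact sum_le_sum fun x _ => (mul_sum ..).trans_le <| sum_le_sum fun y _ =>
      mul_tsub_add_tsub_le (hp x) (hp y)
  calc n ^ 2 * edgeConn G = n * (n * edgeConn G) := by ring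
    _ ≤ n * ∑ x, ∑ y ∈ G.neighborFinset x, (p x - p y) :=
      Nat.mul_le_mul_left n (mul_edgeConn_le_sum_tsub G n p hp hfull hempty)
    _ ≤ ∑ x, ∑ y ∈ G.neighborFinset x, p x * (n - p y) := by omega
    _ ≤ fiberEdgeBoundary G n p := by rw [fiberEdgeBoundary_eq]; exact Nat.le_add_left _ _

lemma sub_one_mul_le_fiberEdgeBoundary (hp : ∀ x, 1 ≤ p x) (hpn : ∀ x, p x < n) :
    (n - 1) * (Fintype.card V + 2 * #G.edgeFinset) ≤ fiberEdgeBoundary G n p := by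
  have hdiag : (n - 1) * Fintype.card V ≤ ∑ x, p x * (n - p x) := by
    rw [mul_comm, ← smul_eq_mul, ← card_univ]
    refine card_nsmul_le_sum _ _ _ fun x _ => ?_
    have := two_mul_sub_one_le (hp x) (hpn x) (hp x) (hpn x)
    omega
  have hoff : 2 * ((n - 1) * (2 * #G.edgeFinset)) ≤
      2 * ∑ x, ∑ y ∈ G.neighborFinset x, p x * (n - p y) := by
    rw [two_mul_sum_sum_neighborFinset, ← sum_degrees_eq_twice_card_edges,
      show 2 * ((n - 1) * ∑ x, G.degree x) = ∑ x, G.degree x * (2 * (n - 1)) by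
        rw [← sum_mul]; ring]
    refine sum_le_sum fun x _ => ?_
    rw [← card_neighborFinset_eq_degree, ← smul_eq_mul]
    exact card_nsmul_le_sum _ _ _ fun y _ => two_mul_sub_one_le (hp x) (hpn x) (hp y) (hpn y)
  rw [fiberEdgeBoundary_eq]
  nlinarith

lemma lt_fiberEdgeBoundary_of_exists_eq_zero {d : ℕ} (hG : G.Connected)
    (hd : ∀ x, d ≤ G.degree x) (hd1 : 1 ≤ d) (hn : 2 ≤ n) (hpn : ∀ x, p x < n)
    (hzero : ∃ x, p x = 0) (hsum : n * (d + 1) ≤ ∑ x, p x + 2) :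
    2 * (n * (d + 1)) < fiberEdgeBoundary G n p + 4 := by
  set g : V → ℕ := fun x => ∑ y ∈ insert x (G.neighborFinset x), (n - p y)
  have hone : ∀ s : Finset V, #s ≤ ∑ y ∈ s, (n - p y) := fun s => by
    rw [card_eq_sum_ones]
    exact sum_le_sum fun y _ => by have := hpn y; omega
  have hcard : ∀ x, d + 1 ≤ #(insert x (G.neighborFinset x)) := fun x => by
    rw [card_insert_of_notMem (by simp), card_neighborFinset_eq_degree]
    exact Nat.succ_le_succ (hd x)
  have hg : ∀ x, d + 1 ≤ g x := fun x => (hcard x).trans (hone _)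
  have hpos : ∃ x, 1 ≤ p x := by
    by_contra! h
    have : ∑ x, p x = 0 := sum_eq_zero fun x _ => Nat.lt_one_iff.mp (h x)
    have : 2 * 2 ≤ n * (d + 1) := Nat.mul_le_mul hn (by omega)
    omega
  obtain ⟨a, b, hab, ha, hb⟩ := exists_adj_one_le_of_eq_zero hG hpos hzero
  have hga : d + n ≤ g a := by
    have hb' : b ∈ insert a (G.neighborFinset a) := by simp [hab]
    have := hcard a
    rw [← card_erase_add_one hb'] at this
    have := hone ((insert a (G.neighborFinset a)).erase b)
    rw [show g a = _ from (add_sum_erase _ _ hb').symm, hb, Nat.sub_zero]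
    omega
  have hsplit : fiberEdgeBoundary G n p = ∑ x, p x * (g x - (d + 1)) + (d + 1) * ∑ x, p x := by
    rw [mul_sum, ← sum_add_distrib]
    refine sum_congr rfl fun x _ => ?_
    rw [mul_comm (d + 1), ← mul_add, Nat.sub_add_cancel (hg x)]
  have hextra : p a * (n - 1) ≤ ∑ x, p x * (g x - (d + 1)) :=
    (Nat.mul_le_mul_left (p a) (show n - 1 ≤ g a - (d + 1) by omega)).trans
      (single_le_sum (f := fun x => p x * (g x - (d + 1))) (fun _ _ => Nat.zero_le _) (mem_univ a))
  have hdouble : 2 * ∑ x, p x ≤ (d + 1) * ∑ x, p x := Nat.mul_le_mul_right _ (by omega)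
  have hpa : 1 ≤ p a * (n - 1) := Nat.mul_le_mul ha (by omega : 1 ≤ n - 1)
  omega

lemma lt_fiberEdgeBoundary (hG : G.Connected) (hδ : 1 ≤ G.minDegree) (hn : 2 ≤ n)
    (h : 2 * n * G.minDegree + 2 * n - 4 <
      min (n ^ 2 * edgeConn G) ((n - 1) * (Fintype.card V + 2 * #G.edgeFinset)))
    (hp : ∀ x, p x ≤ n) (hsum : n * (G.minDegree + 1) ≤ ∑ x, p x + 2)
    (hsum' : n * (G.minDegree + 1) ≤ ∑ x, (n - p x) + 2) :
    2 * n * G.minDegree + 2 * n - 4 < fiberEdgeBoundary G n p := by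
  have hB : 2 * n * G.minDegree + 2 * n = 2 * (n * (G.minDegree + 1)) := by ring
  obtain ⟨hconn, hsplit⟩ := lt_min_iff.mp h
  by_cases hfull : ∃ x, p x = n <;> by_cases hempty : ∃ x, p x = 0
  · exact hconn.trans_le (sq_mul_edgeConn_le_fiberEdgeBoundary G hp hfull hempty)
  · push Not at hempty
    obtain ⟨a, ha⟩ := hfull
    have := lt_fiberEdgeBoundary_of_exists_eq_zero G (p := fun x => n - p x) hG
      G.minDegree_le_degree hδ hn (fun x => by have := hp x; have := hempty x; omega)
      ⟨a, by simp [ha]⟩ hsum'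
    rw [fiberEdgeBoundary_tsub G n p hp] at this
    omega
  · push Not at hfull
    have := lt_fiberEdgeBoundary_of_exists_eq_zero G hG G.minDegree_le_degree hδ hn
      (fun x => lt_of_le_of_ne (hp x) (hfull x)) hempty hsum
    omega
  · push Not at hfull hempty
    exact hsplit.trans_le (sub_one_mul_le_fiberEdgeBoundary G
      (fun x => Nat.one_le_iff_ne_zero.mpr (hempty x)) (fun x => lt_of_le_of_ne (hp x) (hfull x)))

end FiberEdgeBoundary

section StrongProduct

lemma strongProd_top_adj {V β : Type*} (G : SimpleGraph V) {u v : V × β} :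
    (strongProd G (⊤ : SimpleGraph β)).Adj u v ↔ u ≠ v ∧ (u.1 = v.1 ∨ G.Adj u.1 v.1) := by
  obtain ⟨x, i⟩ := u
  obtain ⟨y, j⟩ := v
  simp only [strongProd, top_adj, ne_eq, Prod.mk.injEq]
  by_cases hxy : x = y <;> by_cases hij : i = j <;> simp [hxy, hij]

lemma card_fiber_compl {V β : Type*} [Fintype β] [DecidableEq V] [DecidableEq β]
    (W : Finset (V × β)) (x : V) :
    #{i | (x, i) ∉ W} = Fintype.card β - #{i | (x, i) ∈ W} := by
  rw [← card_univ, ← card_filter_add_card_filter_not (s := univ) (fun i => (x, i) ∈ W)]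
  omega

lemma card_product_univ_sdiff {V β : Type*} [Fintype β] [DecidableEq V] [DecidableEq β]
    (s : Finset V) (W : Finset (V × β)) :
    #((s ×ˢ univ) \ W) = ∑ y ∈ s, (Fintype.card β - #{i | (y, i) ∈ W}) := by
  rw [sdiff_eq_filter, card_filter, sum_product]
  refine sum_congr rfl fun y _ => ?_
  rw [← card_filter, card_fiber_compl]

variable {V β : Type*} [Fintype V] [DecidableEq V] [Fintype β] [DecidableEq β]

lemma sum_fst_eq_sum_card_fiber_mul (W : Finset (V × β)) (f : V → ℕ) :
    ∑ u ∈ W, f u.1 = ∑ x, #{i | (x, i) ∈ W} * f x := by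
  conv_lhs => rw [← filter_univ_mem W, sum_filter, Fintype.sum_prod_type]
  refine sum_congr rfl fun x _ => ?_
  rw [← sum_filter]
  simp only [sum_const, smul_eq_mul]

lemma sum_card_fiber (W : Finset (V × β)) : ∑ x, #{i | (x, i) ∈ W} = #W := by
  simpa using (sum_fst_eq_sum_card_fiber_mul W (fun _ => 1)).symm

variable (G : SimpleGraph V) [DecidableRel G.Adj]
  [DecidableRel (strongProd G (⊤ : SimpleGraph β)).Adj]

lemma neighborFinset_strongProd_top (x : V) (i : β) :
    (strongProd G (⊤ : SimpleGraph β)).neighborFinset (x, i) =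
      (insert x (G.neighborFinset x) ×ˢ univ).erase (x, i) := by
  ext ⟨y, j⟩
  simp only [mem_neighborFinset, strongProd_top_adj, mem_erase, mem_product, mem_insert,
    mem_univ, and_true]
  rw [ne_comm, eq_comm (a := y)]

lemma degree_strongProd_top_add_one (x : V) (i : β) :
    (strongProd G (⊤ : SimpleGraph β)).degree (x, i) + 1 = Fintype.card β * (G.degree x + 1) := by
  rw [← card_neighborFinset_eq_degree, neighborFinset_strongProd_top,
    card_erase_add_one (by simp), card_product, card_insert_of_notMem (by simp), card_univ,
    card_neighborFinset_eq_degree, mul_comm]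

lemma ncard_edgesBetween_strongProd_top (W : Finset (V × β)) :
    (edgesBetween (strongProd G (⊤ : SimpleGraph β)) ↑W (↑W)ᶜ).ncard =
      fiberEdgeBoundary G (Fintype.card β) (fun x => #{i | (x, i) ∈ W}) := by
  rw [card_edgesBetween_compl, fiberEdgeBoundary, ← sum_fst_eq_sum_card_fiber_mul]
  refine sum_congr rfl fun ⟨x, i⟩ hu => ?_
  rw [neighborFinset_strongProd_top, ← card_product_univ_sdiff, erase_sdiff_comm,
    erase_eq_of_notMem (by simp [hu])]

lemma le_degree_strongProd_top_add_one (w : V × β) :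
    Fintype.card β * (G.minDegree + 1) ≤ (strongProd G (⊤ : SimpleGraph β)).degree w + 1 := by
  rw [degree_strongProd_top_add_one]
  exact Nat.mul_le_mul_left _ (Nat.succ_le_succ (G.minDegree_le_degree w.1))

lemma restEdgeConn_strongProd_top_add_four_le [Nonempty V] (hβ : 4 ≤ Fintype.card β) :
    restEdgeConn (strongProd G (⊤ : SimpleGraph β)) + 4 ≤
      2 * (Fintype.card β * (G.minDegree + 1)) := by
  obtain ⟨x, hx⟩ := G.exists_minimal_degree_vertex
  obtain ⟨i, j, k, hij, hik, hjk⟩ := (Fintype.two_lt_card_iff (α := β)).mp (by omega)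
  have h := restEdgeConn_add_two_le (strongProd G (⊤ : SimpleGraph β))
    (u := (x, i)) (v := (x, j)) (w := (x, k)) ((strongProd_top_adj G).mpr (by simp [hij]))
    (by simp [hik.symm]) (by simp [hjk.symm]) fun z _ _ => by
      have := le_degree_strongProd_top_add_one G z
      nlinarith
  have hi := degree_strongProd_top_add_one G x i
  have hj := degree_strongProd_top_add_one G x j
  rw [← hx] at hi hj
  omega

end StrongProduct

lemma lt_ncard_of_ne_connectedComponent {V : Type*} [Fintype V] [DecidableEq V]
    {G : SimpleGraph V} [DecidableRel G.Adj] {n : ℕ} (hG : G.Connected) (hδ : 1 ≤ G.minDegree)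
    (hn : 2 ≤ n)
    (h : 2 * n * G.minDegree + 2 * n - 4 <
      min (n ^ 2 * edgeConn G) ((n - 1) * (Fintype.card V + 2 * #G.edgeFinset)))
    {S : Set (Sym2 (V × Fin n))} {C D : ((strongProd G ⊤).deleteEdges S).ConnectedComponent}
    (hCD : C ≠ D) (hC : n * (G.minDegree + 1) ≤ C.supp.ncard + 2)
    (hD : n * (G.minDegree + 1) ≤ D.supp.ncard + 2) :
    2 * n * G.minDegree + 2 * n - 4 < S.ncard := by
  classical
  set W := C.supp.toFinset
  set p : V → ℕ := fun x => #{i | (x, i) ∈ W}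
  have hcut : fiberEdgeBoundary G n p ≤ S.ncard := by
    have h := ncard_edgesBetween_strongProd_top G W
    rw [Set.coe_toFinset, Fintype.card_fin] at h
    exact h ▸ Set.ncard_le_ncard (edgesBetween_supp_compl_subset _ S C) (Set.toFinite S)
  have hW : n * (G.minDegree + 1) ≤ ∑ x, p x + 2 := by
    rwa [sum_card_fiber, ← Set.ncard_eq_toFinset_card']
  have hWc : n * (G.minDegree + 1) ≤ ∑ x, (n - p x) + 2 := by
    have hsub : D.supp ⊆ ↑Wᶜ := by
      intro z hz
      rw [mem_coe, mem_compl, Set.mem_toFinset, ConnectedComponent.mem_supp_iff]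
      exact fun hzC => hCD (hzC.symm.trans ((D.mem_supp_iff z).mp hz))
    have := hD.trans (Nat.add_le_add_right
      ((Set.ncard_le_ncard hsub (Set.toFinite _)).trans_eq (Set.ncard_coe_finset _)) 2)
    simpa only [← sum_card_fiber, mem_compl, card_fiber_compl, Fintype.card_fin] using this
  exact (lt_fiberEdgeBoundary G hG hδ hn h
    (fun x => card_le_univ _ |>.trans_eq (Fintype.card_fin n)) hW hWc).trans_le hcut

theorem superRestricted_strongProd_completeGraph {V : Type*} [Fintype V]
    (G : SimpleGraph V) (m n : ℕ) (hm : Fintype.card V = m) (hnt : 2 ≤ m)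
    (hG : G.Connected) (hn : 4 ≤ n)
    (h : 2 * n * minDeg G + 2 * n - 4 <
      min (n ^ 2 * edgeConn G) ((n - 1) * (m + 2 * numEdges G))) :
    SuperRestrictedEdgeConnected (strongProd G (SimpleGraph.completeGraph (Fin n))) := by
  classical
  set Γ := strongProd G (SimpleGraph.completeGraph (Fin n))
  rw [minDeg_eq_minDegree, numEdges_eq_card_edgeFinset, ← hm] at h
  have : Nontrivial V := Fintype.one_lt_card_iff_nontrivial.mp (by omega)
  have hδ : 1 ≤ G.minDegree := hG.preconnected.minDegree_pos_of_nontrivial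
  set K := n * (G.minDegree + 1)
  intro S hS hmin
  have hS_le : S.ncard + 4 ≤ 2 * K := by
    have := restEdgeConn_strongProd_top_add_four_le (β := Fin n) G (by simpa using hn)
    rw [Fintype.card_fin] at this
    exact hmin ▸ this
  by_contra! hne2
  have hlarge : ∀ w, K ≤ ((Γ.deleteEdges S).connectedComponentMk w).supp.ncard + 2 := fun w =>
    le_ncard_supp_add_two Γ (fun z => by simpa using le_degree_strongProd_top_add_one G z)
      hS_le _ (by have := hS.2.2 w; have := hne2 w; omega)
  obtain ⟨u, w, huw⟩ : ∃ u w, ¬ (Γ.deleteEdges S).Reachable u w := by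
    by_contra! hr
    have : Nonempty (V × Fin n) := ⟨(Classical.arbitrary V, ⟨0, by omega⟩)⟩
    exact hS.2.1 ⟨hr⟩
  have := lt_ncard_of_ne_connectedComponent hG hδ (by omega) h
    (fun hC => huw (ConnectedComponent.exact hC)) (hlarge u) (hlarge w)
  have hK : 2 * n * G.minDegree + 2 * n = 2 * K := by ring
  omega
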